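/- Let G^1_m(q) = \sum_{n=0}^\infty (-1)^n q^{n(n+1)/2+mn}/(q;q)_n^2 \cdot (2m + E_1(q) + 2\sum_{j=1}^n (1+q^j)/(1-q^j)) for |q|<1, where E_1(q) = 1 - 4\sum_{n\geq1} q^n/(1-q^n). Then G^1_m satisfies the same recursion as G^0_m: G^1_{m+1}(q) - (2-q^m) G^1_m(q) + G^1_{m-1}(q) = 0 for all m \in \mathbb{Z}. -/

import Mathlib

/-- `(q;q)_n = ∏_{j=1}^n (1-q^j)`. -/
noncomputable def qPoch (q : ℂ) (n : ℕ) : ℂ :=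
  ∏ j ∈ Finset.range n, (1 - q ^ (j + 1))

/-- Eisenstein series `E₁(q) = 1 - 4 ∑_{n≥1} q^n/(1-q^n)`. -/
noncomputable def Eone (q : ℂ) : ℂ :=
  1 - 4 * ∑' n : ℕ, q ^ (n + 1) / (1 - q ^ (n + 1))

/-- `G¹_m(q) = ∑_{n≥0} (-1)^n q^{n(n+1)/2+mn}/(q;q)_n² (2m + E₁(q) + 2∑_{j=1}^n (1+q^j)/(1-q^j))`. -/
noncomputable def G1 (q : ℂ) (m : ℤ) : ℂ :=
  ∑' n : ℕ, (-1 : ℂ) ^ n * q ^ (n * (n + 1) / 2) * q ^ (m * (n : ℤ)) / (qPoch q n) ^ 2 *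
    (2 * m + Eone q + 2 * ∑ j ∈ Finset.Icc 1 n, (1 + q ^ j) / (1 - q ^ j))

/-!
Write the `n`-th term of `G¹_m` as `w_m(n) (2m + E₁ + 2 H_n)`, where `w_m(n)` is the `n`-th term
of `G⁰_m` and `H_n = ∑_{j ≤ n} (1+q^j)/(1-q^j)`. From `w_{m+1}(n) = q^n w_m(n)`,
`w_m(n+1) = -q^{m+n+1} w_m(n)/(1-q^{n+1})²` and `H_{n+1} = H_n + (1+q^{n+1})/(1-q^{n+1})`
one finds that the second difference in `m` of the `(n+1)`-st term is `-q^m` times the `n`-th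
term, while the second difference of the `0`-th term, `2m + E₁`, vanishes. Summing over `n`
gives `G¹_{m+1} - 2 G¹_m + G¹_{m-1} = -q^m G¹_m`. The series converge absolutely since
`w_m(n)` decays faster than any geometric sequence and `H_n` grows linearly.
-/

open Finset Filter

theorem Nat.add_one_mul_add_two_div_two (n : ℕ) :
    (n + 1) * (n + 1 + 1) / 2 = n * (n + 1) / 2 + (n + 1) := by
  rw [show (n + 1) * (n + 1 + 1) = n * (n + 1) + 2 * (n + 1) by ring,
    Nat.add_mul_div_left _ _ two_pos]

theorem one_sub_norm_le_norm_one_sub_pow {R : Type*} [NormedRing R] [NormOneClass R] {q : R}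
    (hq : ‖q‖ ≤ 1) {j : ℕ} (hj : j ≠ 0) : 1 - ‖q‖ ≤ ‖1 - q ^ j‖ :=
  calc 1 - ‖q‖ ≤ ‖(1 : R)‖ - ‖q ^ j‖ := by
        rw [norm_one]
        linarith [norm_pow_le' q (Nat.pos_of_ne_zero hj), pow_le_of_le_one (norm_nonneg q) hq hj]
    _ ≤ ‖1 - q ^ j‖ := norm_sub_norm_le _ _

theorem summable_succ_mul_of_le_geometric_mul {u : ℕ → ℝ} {c r : ℝ} (hu : ∀ n, 0 ≤ u n)
    (hr0 : 0 ≤ r) (hr : r < 1) (h : ∀ n, u (n + 1) ≤ c * r ^ n * u n) :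
    Summable fun n : ℕ => (n + 1) * u n := by
  have hsmall : ∀ᶠ n in atTop, c * r ^ n ≤ 1 / 4 := by
    refine Tendsto.eventually_le_const (v := 0) (by norm_num) ?_
    simpa using (tendsto_pow_atTop_nhds_zero_of_lt_one hr0 hr).const_mul c
  refine summable_of_ratio_norm_eventually_le (r := 1 / 2) (by norm_num) ?_
  filter_upwards [hsmall] with n hn
  have hun := hu n
  rw [Real.norm_of_nonneg (mul_nonneg (by positivity) (hu _)),
    Real.norm_of_nonneg (mul_nonneg (by positivity) (hu _))]
  push_cast
  calc (n + 1 + 1 : ℝ) * u (n + 1) ≤ (n + 1 + 1) * (c * r ^ n * u n) := by gcongr; exact h n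
    _ ≤ (n + 1 + 1) * (1 / 4 * u n) := by gcongr
    _ ≤ 1 / 2 * ((n + 1) * u n) := by nlinarith

noncomputable def G0Term (q : ℂ) (m : ℤ) (n : ℕ) : ℂ :=
  (-1 : ℂ) ^ n * q ^ (n * (n + 1) / 2) * q ^ (m * (n : ℤ)) / (qPoch q n) ^ 2

noncomputable def qHarmonic (q : ℂ) (n : ℕ) : ℂ :=
  ∑ j ∈ Icc 1 n, (1 + q ^ j) / (1 - q ^ j)

noncomputable def G1Term (q : ℂ) (m : ℤ) (n : ℕ) : ℂ :=
  G0Term q m n * (2 * m + Eone q + 2 * qHarmonic q n)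

theorem G1_eq_tsum (q : ℂ) (m : ℤ) : G1 q m = ∑' n, G1Term q m n := rfl

theorem qPoch_succ (q : ℂ) (n : ℕ) : qPoch q (n + 1) = qPoch q n * (1 - q ^ (n + 1)) :=
  prod_range_succ _ _

theorem qHarmonic_succ (q : ℂ) (n : ℕ) :
    qHarmonic q (n + 1) = qHarmonic q n + (1 + q ^ (n + 1)) / (1 - q ^ (n + 1)) :=
  sum_Icc_succ_top (Nat.le_add_left 1 n) _

theorem norm_qHarmonic_le {q : ℂ} (hq : ‖q‖ < 1) (n : ℕ) :
    ‖qHarmonic q n‖ ≤ n * (2 / (1 - ‖q‖)) := by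
  have hterm : ∀ j ∈ Icc 1 n, ‖(1 + q ^ j) / (1 - q ^ j)‖ ≤ 2 / (1 - ‖q‖) := by
    intro j hj
    have hj0 : j ≠ 0 := by rw [mem_Icc] at hj; omega
    rw [norm_div]
    refine div_le_div₀ zero_le_two ?_ (by linarith) (one_sub_norm_le_norm_one_sub_pow hq.le hj0)
    calc ‖1 + q ^ j‖ ≤ 1 + ‖q‖ ^ j := by simpa using norm_add_le (1 : ℂ) (q ^ j)
      _ ≤ 2 := by linarith [pow_le_one₀ (norm_nonneg q) hq.le (n := j)]
  simpa [qHarmonic] using norm_sum_le_of_le _ hterm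

theorem G0Term_succ {q : ℂ} (hq0 : q ≠ 0) (m : ℤ) (n : ℕ) :
    G0Term q m (n + 1) = -(q ^ m * q ^ (n + 1)) / (1 - q ^ (n + 1)) ^ 2 * G0Term q m n := by
  rw [G0Term, G0Term, qPoch_succ, Nat.add_one_mul_add_two_div_two, pow_add,
    show m * ((n + 1 : ℕ) : ℤ) = m * n + m by push_cast; ring, zpow_add₀ hq0, mul_pow, ← div_div]
  ring

theorem G0Term_add_one_left {q : ℂ} (hq0 : q ≠ 0) (m : ℤ) (n : ℕ) :
    G0Term q (m + 1) n = G0Term q m n * q ^ n := by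
  rw [G0Term, G0Term, add_mul, one_mul, zpow_add₀ hq0, zpow_natCast]
  ring

theorem norm_G0Term_succ_le {q : ℂ} (hq0 : q ≠ 0) (hq : ‖q‖ < 1) (m : ℤ) (n : ℕ) :
    ‖G0Term q m (n + 1)‖ ≤ ‖q ^ m‖ * ‖q‖ / (1 - ‖q‖) ^ 2 * ‖q‖ ^ n * ‖G0Term q m n‖ := by
  have h1q : 0 < 1 - ‖q‖ := by linarith
  calc ‖G0Term q m (n + 1)‖
      = ‖q ^ m‖ * ‖q‖ ^ (n + 1) / ‖1 - q ^ (n + 1)‖ ^ 2 * ‖G0Term q m n‖ := by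
        rw [G0Term_succ hq0, norm_mul, norm_div, norm_neg, norm_mul, norm_pow, norm_pow]
    _ ≤ ‖q ^ m‖ * ‖q‖ ^ (n + 1) / (1 - ‖q‖) ^ 2 * ‖G0Term q m n‖ := by
        gcongr
        exact one_sub_norm_le_norm_one_sub_pow hq.le n.succ_ne_zero
    _ = ‖q ^ m‖ * ‖q‖ / (1 - ‖q‖) ^ 2 * ‖q‖ ^ n * ‖G0Term q m n‖ := by ring

theorem summable_G1Term {q : ℂ} (hq0 : q ≠ 0) (hq : ‖q‖ < 1) (m : ℤ) :
    Summable (G1Term q m) := by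
  set K := ‖2 * (m : ℂ) + Eone q‖ + 2 * (2 / (1 - ‖q‖))
  have hB : 0 ≤ 2 / (1 - ‖q‖) := div_nonneg zero_le_two (by linarith)
  have hfactor : ∀ n : ℕ, ‖2 * (m : ℂ) + Eone q + 2 * qHarmonic q n‖ ≤ K * (n + 1) := by
    intro n
    have hH := norm_qHarmonic_le hq n
    calc ‖2 * (m : ℂ) + Eone q + 2 * qHarmonic q n‖
        ≤ ‖2 * (m : ℂ) + Eone q‖ + 2 * ‖qHarmonic q n‖ := by
          simpa using norm_add_le (2 * (m : ℂ) + Eone q) (2 * qHarmonic q n)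
      _ ≤ K * (n + 1) := by
          have := norm_nonneg (2 * (m : ℂ) + Eone q)
          have : (0 : ℝ) ≤ n := n.cast_nonneg
          nlinarith
  have hmaj := (summable_succ_mul_of_le_geometric_mul (fun n => norm_nonneg _) (norm_nonneg q) hq
    (norm_G0Term_succ_le hq0 hq m)).mul_left K
  refine hmaj.of_norm_bounded fun n => ?_
  rw [G1Term, norm_mul]
  calc ‖G0Term q m n‖ * ‖2 * (m : ℂ) + Eone q + 2 * qHarmonic q n‖
      ≤ ‖G0Term q m n‖ * (K * (n + 1)) := by gcongr; exact hfactor n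
    _ = K * ((n + 1) * ‖G0Term q m n‖) := by ring

theorem G1Term_zero (q : ℂ) (m : ℤ) : G1Term q m 0 = 2 * m + Eone q := by
  simp [G1Term, G0Term, qHarmonic, qPoch]

theorem G1Term_second_diff_succ {q : ℂ} (hq0 : q ≠ 0) {n : ℕ} (hn : q ^ (n + 1) ≠ 1) (m : ℤ) :
    G1Term q (m + 1) (n + 1) - 2 * G1Term q m (n + 1) + G1Term q (m - 1) (n + 1) =
      -q ^ m * G1Term q m n := by
  have hx : q ^ (n + 1) ≠ 0 := pow_ne_zero _ hq0
  have h1x : 1 - q ^ (n + 1) ≠ 0 := sub_ne_zero.mpr hn.symm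
  have hdown : G0Term q (m - 1) (n + 1) = G0Term q m (n + 1) / q ^ (n + 1) := by
    rw [eq_div_iff hx, ← G0Term_add_one_left hq0, sub_add_cancel]
  simp only [G1Term, qHarmonic_succ, G0Term_add_one_left hq0 m, hdown, G0Term_succ hq0 m n]
  push_cast
  field_simp
  ring

theorem stmt_7 (q : ℂ) (hq0 : q ≠ 0) (hq : ‖q‖ < 1) (m : ℤ) :
    G1 q (m + 1) - (2 - q ^ m) * G1 q m + G1 q (m - 1) = 0 := by
  have hsum : ∀ k, HasSum (G1Term q k) (G1 q k) := fun k => (summable_G1Term hq0 hq k).hasSum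
  have hdiff := ((hsum (m + 1)).sub ((hsum m).mul_left 2)).add (hsum (m - 1))
  have hstep : ∀ n : ℕ,
      G1Term q (m + 1) (n + 1) - 2 * G1Term q m (n + 1) + G1Term q (m - 1) (n + 1) =
        -q ^ m * G1Term q m n := fun n =>
    G1Term_second_diff_succ hq0 (fun h => (pow_lt_one₀ (norm_nonneg q) hq n.succ_ne_zero).ne
      (by rw [← norm_pow, h, norm_one])) m
  have hrec : G1 q (m + 1) - 2 * G1 q m + G1 q (m - 1) = -q ^ m * G1 q m := by
    rw [← hdiff.tsum_eq, hdiff.summable.tsum_eq_zero_add]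
    simp only [hstep, G1Term_zero, tsum_mul_left, ← G1_eq_tsum]
    push_cast
    ring
  linear_combination hrec
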